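/- For every θ > 0, the total variation distance between the law of the depth D_n^{(θ)} of the n-th inserted node in a Hoppe tree with parameter θ and the Poisson distribution with parameter E[D_n^{(θ)}] is O(1/log n) as n → ∞; that is, there exist C > 0 and n_0 such that for all n ≥ n_0, d_TV(L(D_n^{(θ)}), Poisson(E[D_n^{(θ)}])) ≤ C/log n. -/

import Mathlib

open MeasureTheory ProbabilityTheory Real Filter Topology

noncomputable section

/-- Depth of node `i` in the Hoppe tree grown from the parent choices `U`:
`U k ω` is the parent of node `k + 2` (a node in `{1, …, k + 1}`, almost surely);
node `1` is the root. The `min` clipping is irrelevant almost surely. -/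
def hoppeDepth {Ω : Type*} (U : ℕ → Ω → ℕ) (ω : Ω) : ℕ → ℕ
  | 0 => 0
  | 1 => 0
  | n + 2 => hoppeDepth U ω (min (U n ω) (n + 1)) + 1
  decreasing_by omega

/-- The parent choices of a Hoppe tree with parameter `θ`: `U k` is the (random) parent
of node `k + 2`, the choices being independent, node `k + 2` choosing its parent among
nodes `1, …, k + 1`, namely the root `1` with probability `θ / (θ + k)` and each other
node with probability `1 / (θ + k)`. -/
structure IsHoppeParents {Ω : Type*} [MeasurableSpace Ω] (θ : ℝ) (μ : Measure Ω)
    (U : ℕ → Ω → ℕ) : Prop where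
  meas : ∀ k, Measurable (U k)
  indep : iIndepFun U μ
  root : ∀ k : ℕ, μ {ω | U k ω = 1} = ENNReal.ofReal (θ / (θ + k))
  nonroot : ∀ k j : ℕ, 2 ≤ j → j ≤ k + 1 → μ {ω | U k ω = j} = ENNReal.ofReal (1 / (θ + k))
  range : ∀ k : ℕ, μ {ω | 1 ≤ U k ω ∧ U k ω ≤ k + 1} = 1

/-- Height of the Hoppe tree with `n` nodes: maximal depth over nodes `1, …, n`. -/
def hoppeHeight {Ω : Type*} (U : ℕ → Ω → ℕ) (ω : Ω) (n : ℕ) : ℕ :=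
  (Finset.Icc 1 n).sup (fun i => hoppeDepth U ω i)

/-- Internal path length of the Hoppe tree with `n` nodes: sum of the depths of
nodes `1, …, n`. -/
def hoppePathLength {Ω : Type*} (U : ℕ → Ω → ℕ) (ω : Ω) (n : ℕ) : ℕ :=
  ∑ i ∈ Finset.Icc 1 n, hoppeDepth U ω i

/-- Number of leaves of the Hoppe tree with `n` nodes: nodes `j ∈ {1, …, n}` that are
the parent of no node `k ∈ {2, …, n}`. -/
def hoppeLeafCount {Ω : Type*} (U : ℕ → Ω → ℕ) (ω : Ω) (n : ℕ) : ℕ :=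
  (@Finset.filter ℕ (fun j => ∀ k ∈ Finset.Icc 2 n, U (k - 2) ω ≠ j)
    (fun _ => Finset.decidableDforallFinset) (Finset.Icc 1 n)).card

/-- Total variation distance between two measures on `ℕ`. -/
def tvDist (μ ν : Measure ℕ) : ℝ := ⨆ A : Set ℕ, |(μ A).toReal - (ν A).toReal|

/-!
The depth of node `N + 2` is `1 + S`, where `S` counts the successes of independent trials with
success probabilities `pᵢ = 1 / (θ + i + 1)`, `i < N`: conditioning on the parent of the newest
node gives a recursion for the law of the depth, and the Poisson binomial law satisfies it.
Hence `E[D] = ν = 1 + ∑ pᵢ`, which is at least `log n / (θ + 1)` by the harmonic bound.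

Chen–Stein: if `g` solves `ν g (k + 1) - k g k = 1_A k - Po(ν)(A)`, then
`P(1 + S ∈ A) - Po(ν)(A) = E[(ν - 1) g (S + 2) - S g (S + 1)] + E[g (S + 2) - g (S + 1)]`.
The increments of `g` are at most `1 / ν`, and an induction on the number of trials bounds the
first mean by `(1 / ν) ∑ pᵢ² ≤ 1 / (θ ν)`, so the total variation distance is `O(1 / ν)`.
-/

open Finset
open scoped NNReal

section PoissonBinomial

variable {p : ℕ → ℝ}

def poissonBinomial (p : ℕ → ℝ) : ℕ → ℕ → ℝ
  | 0, 0 => 1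
  | 0, _ + 1 => 0
  | N + 1, 0 => (1 - p N) * poissonBinomial p N 0
  | N + 1, k + 1 => (1 - p N) * poissonBinomial p N (k + 1) + p N * poissonBinomial p N k

theorem poissonBinomial_eq_zero_of_lt {N k : ℕ} (h : N < k) : poissonBinomial p N k = 0 := by
  induction N generalizing k with
  | zero => obtain ⟨k, rfl⟩ := Nat.exists_eq_add_one_of_ne_zero h.ne'; rfl
  | succ N ih =>
    obtain ⟨k, rfl⟩ := Nat.exists_eq_add_one_of_ne_zero (by omega : k ≠ 0)
    simp [poissonBinomial, ih (by omega : N < k + 1), ih (by omega : N < k)]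

theorem poissonBinomial_nonneg (hp₀ : ∀ i, 0 ≤ p i) (hp₁ : ∀ i, p i ≤ 1) (N k : ℕ) :
    0 ≤ poissonBinomial p N k := by
  induction N generalizing k with
  | zero => cases k <;> simp [poissonBinomial]
  | succ N ih =>
    have := sub_nonneg.2 (hp₁ N)
    cases k with
    | zero => exact mul_nonneg this (ih 0)
    | succ k => exact add_nonneg (mul_nonneg this (ih _)) (mul_nonneg (hp₀ N) (ih k))

theorem sum_poissonBinomial_succ_mul (N : ℕ) (f : ℕ → ℝ) :
    ∑ m ∈ range (N + 2), poissonBinomial p (N + 1) m * f m =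
      (1 - p N) * ∑ m ∈ range (N + 1), poissonBinomial p N m * f m +
        p N * ∑ m ∈ range (N + 1), poissonBinomial p N m * f (m + 1) := by
  have hlast : ∑ m ∈ range (N + 2), poissonBinomial p N m * f m =
      ∑ m ∈ range (N + 1), poissonBinomial p N m * f m := by
    rw [sum_range_succ, poissonBinomial_eq_zero_of_lt (Nat.lt_succ_self N), zero_mul, add_zero]
  rw [← hlast, sum_range_succ' _ (N + 1), sum_range_succ' (fun m => _ * f m) (N + 1)]
  simp only [poissonBinomial, add_mul, mul_add, sum_add_distrib, mul_sum, mul_assoc]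
  ring

theorem sum_poissonBinomial (N : ℕ) : ∑ m ∈ range (N + 1), poissonBinomial p N m = 1 := by
  induction N with
  | zero => simp [poissonBinomial]
  | succ N ih =>
    simpa [ih] using sum_poissonBinomial_succ_mul (p := p) N fun _ => 1

theorem sum_poissonBinomial_mul_natCast (N : ℕ) :
    ∑ m ∈ range (N + 1), poissonBinomial p N m * m = ∑ i ∈ range N, p i := by
  induction N with
  | zero => simp
  | succ N ih =>
    have h := sum_poissonBinomial_succ_mul (p := p) N fun m => (m : ℝ)
    simp only [Nat.cast_add, Nat.cast_one, mul_add, mul_one, sum_add_distrib,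
      sum_poissonBinomial] at h
    rw [h, ih, sum_range_succ]
    ring

theorem abs_sum_poissonBinomial_mul_le (hp₀ : ∀ i, 0 ≤ p i) (hp₁ : ∀ i, p i ≤ 1) {f : ℕ → ℝ}
    {δ : ℝ} (hf : ∀ m, |f m| ≤ δ) (N : ℕ) :
    |∑ m ∈ range (N + 1), poissonBinomial p N m * f m| ≤ δ := by
  calc |∑ m ∈ range (N + 1), poissonBinomial p N m * f m|
      ≤ ∑ m ∈ range (N + 1), poissonBinomial p N m * δ := by
        refine (abs_sum_le_sum_abs _ _).trans (sum_le_sum fun m _ => ?_)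
        rw [abs_mul, abs_of_nonneg (poissonBinomial_nonneg hp₀ hp₁ N m)]
        exact mul_le_mul_of_nonneg_left (hf m) (poissonBinomial_nonneg hp₀ hp₁ N m)
    _ = δ := by rw [← sum_mul, sum_poissonBinomial, one_mul]

theorem abs_sum_poissonBinomial_stein_le (hp₀ : ∀ i, 0 ≤ p i) (hp₁ : ∀ i, p i ≤ 1) {δ : ℝ}
    (N : ℕ) {f : ℕ → ℝ} (hf : ∀ k, |f (k + 1) - f k| ≤ δ) :
    |∑ m ∈ range (N + 1),
        poissonBinomial p N m * ((∑ i ∈ range N, p i) * f (m + 1) - m * f m)| ≤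
      δ * ∑ i ∈ range N, p i ^ 2 := by
  induction N generalizing f with
  | zero => simp [poissonBinomial]
  | succ N ih =>
    set q := p N
    set T : (ℕ → ℝ) → ℝ := fun g : ℕ → ℝ => ∑ m ∈ range (N + 1),
      poissonBinomial p N m * ((∑ i ∈ range N, p i) * g (m + 1) - (m : ℝ) * g m)
    have hsplit : ∑ m ∈ range (N + 2), poissonBinomial p (N + 1) m *
          ((∑ i ∈ range (N + 1), p i) * f (m + 1) - m * f m) =
        (1 - q) * T f + q * T (fun k => f (k + 1)) +
          q ^ 2 * ∑ m ∈ range (N + 1), poissonBinomial p N m * (f (m + 2) - f (m + 1)) := by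
      rw [sum_poissonBinomial_succ_mul, sum_range_succ p N]
      simp only [T, mul_sum, ← sum_add_distrib]
      refine sum_congr rfl fun m _ => ?_
      push_cast
      ring
    have hq₁ : 0 ≤ 1 - q := sub_nonneg.2 (hp₁ N)
    have hT : |T f| ≤ δ * ∑ i ∈ range N, p i ^ 2 := ih hf
    have hT' : |T (fun k => f (k + 1))| ≤ δ * ∑ i ∈ range N, p i ^ 2 :=
      ih (f := fun k => f (k + 1)) fun k => hf (k + 1)
    have hΔ := abs_sum_poissonBinomial_mul_le hp₀ hp₁ (fun m => hf (m + 1)) N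
    rw [hsplit, sum_range_succ (fun i => p i ^ 2)]
    calc |(1 - q) * T f + q * T (fun k => f (k + 1)) +
            q ^ 2 * ∑ m ∈ range (N + 1), poissonBinomial p N m * (f (m + 2) - f (m + 1))|
        ≤ (1 - q) * |T f| + q * |T (fun k => f (k + 1))| + q ^ 2 * δ := by
          refine (abs_add_le _ _).trans (add_le_add ((abs_add_le _ _).trans_eq ?_) ?_)
          · rw [abs_mul, abs_mul, abs_of_nonneg hq₁, abs_of_nonneg (hp₀ N)]
          · rw [abs_mul, abs_of_nonneg (sq_nonneg q)]
            exact mul_le_mul_of_nonneg_left hΔ (sq_nonneg q)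
      _ ≤ (1 - q) * (δ * ∑ i ∈ range N, p i ^ 2) + q * (δ * ∑ i ∈ range N, p i ^ 2) +
            q ^ 2 * δ := by gcongr; exact hp₀ N
      _ = δ * (∑ i ∈ range N, p i ^ 2 + q ^ 2) := by ring

end PoissonBinomial

section PoissonStein

theorem measureReal_inter_singleton {α : Type*} [MeasurableSpace α] [MeasurableSingletonClass α]
    (μ : Measure α) (A : Set α) (j : α) :
    μ.real (A ∩ {j}) = A.indicator 1 j * μ.real {j} := by
  by_cases hj : j ∈ A
  · simp [hj, Set.inter_singleton_of_mem hj]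
  · simp [hj, Set.inter_singleton_eq_empty.2 hj]

theorem measureReal_inter_Iic_succ (μ : Measure ℕ) [IsFiniteMeasure μ] (A : Set ℕ) (k : ℕ) :
    μ.real (A ∩ Set.Iic (k + 1)) = μ.real (A ∩ Set.Iic k) + μ.real (A ∩ {k + 1}) := by
  rw [show Set.Iic (k + 1) = insert (k + 1) (Set.Iic k) from
    Order.Iic_succ k, Set.insert_eq, Set.union_comm,
    Set.inter_union_distrib_left, measureReal_union _ (MeasurableSet.of_discrete)]
  exact Set.disjoint_left.2 fun j hj hj' => by simp_all

theorem measureReal_Iic_succ (μ : Measure ℕ) [IsFiniteMeasure μ] (k : ℕ) :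
    μ.real (Set.Iic (k + 1)) = μ.real (Set.Iic k) + μ.real {k + 1} := by
  simpa using measureReal_inter_Iic_succ μ Set.univ k

theorem measureReal_Iic_eq_sum (μ : Measure ℕ) [IsFiniteMeasure μ] (k : ℕ) :
    μ.real (Set.Iic k) = ∑ j ∈ range (k + 1), μ.real {j} := by
  rw [sum_measureReal_singleton, coe_range, Set.Iio_add_one_eq_Iic]

variable (r : ℝ≥0)

theorem poissonMeasure_real_singleton_succ (j : ℕ) :
    (r : ℝ) * Po(r).real {j} = (j + 1) * Po(r).real {j + 1} := by
  simp only [poissonMeasure_real_singleton, Nat.factorial_succ, pow_succ]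
  push_cast
  field_simp

theorem hasSum_poissonMeasure_real_singleton : HasSum (fun j => Po(r).real {j}) 1 := by
  simpa only [poissonMeasure_real_singleton] using hasSum_one_poissonMeasure r

theorem one_sub_poissonMeasure_real_Iic (k : ℕ) :
    1 - Po(r).real (Set.Iic k) = ∑' j, Po(r).real {j + (k + 1)} := by
  have h := (hasSum_poissonMeasure_real_singleton r).summable.sum_add_tsum_nat_add (k + 1)
  rw [(hasSum_poissonMeasure_real_singleton r).tsum_eq, ← measureReal_Iic_eq_sum] at h
  linarith

theorem poissonMeasure_real_Iic_le (M : ℕ) :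
    (r : ℝ) * Po(r).real (Set.Iic M) ≤ (M + 1) * Po(r).real (Set.Iic (M + 1)) := by
  rw [measureReal_Iic_eq_sum, measureReal_Iic_eq_sum, mul_sum, sum_range_succ' _ (M + 1), mul_add,
    mul_sum]
  refine le_add_of_le_of_nonneg (sum_le_sum fun j hj => ?_) (by positivity)
  rw [poissonMeasure_real_singleton_succ]
  gcongr
  exact_mod_cast Nat.lt_succ_iff.1 (mem_range.1 hj)

theorem mul_one_sub_poissonMeasure_real_Iic_succ_le (M : ℕ) :
    (M + 1) * (1 - Po(r).real (Set.Iic (M + 1))) ≤ r * (1 - Po(r).real (Set.Iic M)) := by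
  have hs := (hasSum_poissonMeasure_real_singleton r).summable
  rw [one_sub_poissonMeasure_real_Iic, one_sub_poissonMeasure_real_Iic, ← tsum_mul_left,
    ← tsum_mul_left]
  refine Summable.tsum_le_tsum (fun j => ?_) (((summable_nat_add_iff _).2 hs).mul_left _)
    (((summable_nat_add_iff _).2 hs).mul_left _)
  rw [poissonMeasure_real_singleton_succ, show j + (M + 1 + 1) = j + (M + 1) + 1 from rfl]
  gcongr
  linarith [(j.cast_nonneg : (0 : ℝ) ≤ j)]

/-- Summing the Stein equation `r g (k + 1) - k g k = 1_A k - Po(r)(A)` against the Poisson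
weights of `0, …, k` gives this closed form. -/
def poissonSteinSolution (A : Set ℕ) : ℕ → ℝ
  | 0 => 0
  | k + 1 => (Po(r).real (A ∩ Set.Iic k) - Po(r).real A * Po(r).real (Set.Iic k)) /
      (r * Po(r).real {k})

variable {r}

theorem mul_poissonSteinSolution_succ (hr : 0 < r) (A : Set ℕ) (k : ℕ) :
    r * Po(r).real {k} * poissonSteinSolution r A (k + 1) =
      Po(r).real (A ∩ Set.Iic k) - Po(r).real A * Po(r).real (Set.Iic k) := by
  have := poissonMeasure_real_singleton_pos k hr
  rw [poissonSteinSolution]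
  field_simp

theorem poissonSteinSolution_spec (hr : 0 < r) (A : Set ℕ) (k : ℕ) :
    r * poissonSteinSolution r A (k + 1) - k * poissonSteinSolution r A k =
      A.indicator 1 k - Po(r).real A := by
  refine mul_left_cancel₀ (poissonMeasure_real_singleton_pos k hr).ne' ?_
  have h := mul_poissonSteinSolution_succ hr A k
  cases k with
  | zero =>
    rw [show Set.Iic 0 = {0} from Set.Iic_bot, measureReal_inter_singleton] at h
    simp only [CharP.cast_eq_zero, zero_mul, sub_zero]
    linear_combination h
  | succ M =>
    have h' := mul_poissonSteinSolution_succ hr A M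
    rw [measureReal_inter_Iic_succ, measureReal_Iic_succ, measureReal_inter_singleton] at h
    rw [poissonMeasure_real_singleton_succ] at h'
    push_cast
    linear_combination h - h'

theorem mul_poissonSteinSolution_add_two_sub (hr : 0 < r) (A : Set ℕ) (M : ℕ) :
    (M + 1) * r * Po(r).real {M + 1} *
        (poissonSteinSolution r A (M + 2) - poissonSteinSolution r A (M + 1)) =
      Po(r).real (A ∩ Set.Iic M) *
          ((M + 1) * (1 - Po(r).real (Set.Iic (M + 1))) - r * (1 - Po(r).real (Set.Iic M))) +
        Po(r).real (A ∩ {M + 1}) *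
          ((M + 1) * (1 - Po(r).real (Set.Iic (M + 1))) + r * Po(r).real (Set.Iic M)) -
        Po(r).real (A \ Set.Iic (M + 1)) *
          ((M + 1) * Po(r).real (Set.Iic (M + 1)) - r * Po(r).real (Set.Iic M)) := by
  have hA : Po(r).real A =
      Po(r).real (A ∩ Set.Iic M) + Po(r).real (A ∩ {M + 1}) + Po(r).real (A \ Set.Iic (M + 1)) := by
    rw [← measureReal_inter_add_sdiff (s := A) (measurableSet_Iic (a := M + 1)),
      measureReal_inter_Iic_succ]
  have h₂ := mul_poissonSteinSolution_succ hr A (M + 1)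
  rw [measureReal_inter_Iic_succ, measureReal_Iic_succ, hA] at h₂
  have h₁ := mul_poissonSteinSolution_succ hr A M
  rw [poissonMeasure_real_singleton_succ, hA] at h₁
  rw [measureReal_Iic_succ]
  linear_combination (↑M + 1) * h₂ - (r : ℝ) * h₁

theorem abs_poissonSteinSolution_add_two_sub_le (hr : 0 < r) (A : Set ℕ) (M : ℕ) :
    |poissonSteinSolution r A (M + 2) - poissonSteinSolution r A (M + 1)| ≤ 1 / r := by
  have hlin := mul_poissonSteinSolution_add_two_sub hr A M
  have hhead := poissonMeasure_real_Iic_le r M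
  have htail := mul_one_sub_poissonMeasure_real_Iic_succ_le r M
  have hb : Po(r).real (A \ Set.Iic (M + 1)) ≤ 1 - Po(r).real (Set.Iic (M + 1)) := by
    rw [← probReal_compl_eq_one_sub measurableSet_Iic]
    exact measureReal_mono (Set.sdiff_subset_compl _ _)
  have ha : Po(r).real (A ∩ Set.Iic M) ≤ Po(r).real (Set.Iic M) :=
    measureReal_mono Set.inter_subset_right
  have he : Po(r).real (A ∩ {M + 1}) ≤ Po(r).real {M + 1} := measureReal_mono Set.inter_subset_right
  have hq := poissonMeasure_real_singleton_pos (M + 1) hr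
  have hr' : (0 : ℝ) < r := hr
  set T := Po(r).real (Set.Iic M)
  set T' := Po(r).real (Set.Iic (M + 1))
  set q := Po(r).real {M + 1}
  have ha₀ : 0 ≤ Po(r).real (A ∩ Set.Iic M) := measureReal_nonneg
  have he₀ : 0 ≤ Po(r).real (A ∩ {M + 1}) := measureReal_nonneg
  have hb₀ : 0 ≤ Po(r).real (A \ Set.Iic (M + 1)) := measureReal_nonneg
  have hα : (M + 1) * (1 - T') - r * (1 - T) ≤ 0 := by linarith
  have hβ : 0 ≤ (M + 1) * T' - r * T := by linarith
  have hE : 0 ≤ (M + 1) * (1 - T') + r * T :=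
    add_nonneg (mul_nonneg (by positivity) (hb₀.trans hb)) (mul_nonneg hr'.le measureReal_nonneg)
  have hT' : T' = T + q := measureReal_Iic_succ Po(r) M
  -- `hlin` is linear in the three masses of `A`, with coefficients of fixed signs: bound each
  -- mass by `0` or by its maximum according to the sign.
  have hbound : |(M + 1) * r * q *
      (poissonSteinSolution r A (M + 2) - poissonSteinSolution r A (M + 1))| ≤ (M + 1) * q := by
    rw [hlin, abs_le]
    constructor
    · nlinarith [mul_le_mul_of_nonpos_right ha hα, mul_le_mul_of_nonneg_right hb hβ,
        mul_nonneg he₀ hE, mul_le_mul_of_nonneg_left hhead hq.le]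
    · nlinarith [mul_nonpos_of_nonneg_of_nonpos ha₀ hα, mul_nonneg hb₀ hβ,
        mul_le_mul_of_nonneg_right he hE, mul_le_mul_of_nonneg_left hhead hq.le]
  rw [abs_mul, abs_of_pos (by positivity)] at hbound
  have hMq : (0 : ℝ) < (M + 1) * q := by positivity
  rw [le_div_iff₀ hr', ← mul_le_mul_iff_of_pos_left hMq]
  linarith

end PoissonStein

section ChenStein

variable {p : ℕ → ℝ}

theorem abs_sum_poissonBinomial_indicator_succ_sub_poissonMeasure_le (hp₀ : ∀ i, 0 ≤ p i)
    (hp₁ : ∀ i, p i ≤ 1) (N : ℕ) {r : ℝ≥0} (hr : (r : ℝ) = 1 + ∑ i ∈ range N, p i)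
    (A : Set ℕ) :
    |∑ m ∈ range (N + 1), poissonBinomial p N m * A.indicator 1 (m + 1) - Po(r).real A| ≤
      (1 + ∑ i ∈ range N, p i ^ 2) / r := by
  have hr₀ : 0 < r := by
    rw [← NNReal.coe_pos, hr]
    linarith [sum_nonneg fun i (_ : i ∈ range N) => hp₀ i]
  set f : ℕ → ℝ := fun k => poissonSteinSolution r A (k + 1)
  have hf (k : ℕ) : |f (k + 1) - f k| ≤ 1 / r := abs_poissonSteinSolution_add_two_sub_le hr₀ A k
  have hstein (m : ℕ) : A.indicator 1 (m + 1) - Po(r).real A =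
      ((∑ i ∈ range N, p i) * f (m + 1) - m * f m) + (f (m + 1) - f m) := by
    rw [← poissonSteinSolution_spec hr₀ A (m + 1), hr]
    push_cast
    ring
  have hsplit : ∑ m ∈ range (N + 1), poissonBinomial p N m * A.indicator 1 (m + 1) -
      Po(r).real A = ∑ m ∈ range (N + 1), poissonBinomial p N m *
        ((∑ i ∈ range N, p i) * f (m + 1) - m * f m) +
      ∑ m ∈ range (N + 1), poissonBinomial p N m * (f (m + 1) - f m) := by
    rw [← sum_add_distrib, ← mul_one (Po(r).real A), ← sum_poissonBinomial (p := p) N, mul_sum,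
      ← sum_sub_distrib]
    refine sum_congr rfl fun m _ => ?_
    rw [← mul_add, ← hstein]
    ring
  rw [hsplit]
  refine (abs_add_le _ _).trans ((add_le_add (abs_sum_poissonBinomial_stein_le hp₀ hp₁ N hf)
    (abs_sum_poissonBinomial_mul_le hp₀ hp₁ hf N)).trans_eq ?_)
  ring

end ChenStein

theorem integral_comp_eq_sum_of_lt {Ω : Type*} [MeasurableSpace Ω] {μ : Measure Ω}
    [IsFiniteMeasure μ] {X : Ω → ℕ} (hX : Measurable X) {n : ℕ} (hXn : ∀ ω, X ω < n)
    (f : ℕ → ℝ) : ∫ ω, f (X ω) ∂μ = ∑ k ∈ range n, μ.real (X ⁻¹' {k}) * f k := by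
  have hsupp : (μ.map X).restrict ↑(range n) = μ.map X :=
    Measure.restrict_eq_self_of_ae_mem <| (ae_map_iff hX.aemeasurable .of_discrete).2 <|
      .of_forall fun ω => mem_coe.2 (mem_range.2 (hXn ω))
  rw [← integral_map hX.aemeasurable (by fun_prop), ← hsupp,
    setIntegral_finset _ (.of_finite (range n).finite_toSet)]
  simp [map_measureReal_apply hX]

section HoppeDepth

variable {Ω Ω' : Type*}

theorem hoppeDepth_add_two (U : ℕ → Ω → ℕ) (ω : Ω) (n : ℕ) :
    hoppeDepth U ω (n + 2) = hoppeDepth U ω (min (U n ω) (n + 1)) + 1 := by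
  rw [hoppeDepth]

theorem hoppeDepth_add_one_le (U : ℕ → Ω → ℕ) (ω : Ω) (n : ℕ) : hoppeDepth U ω (n + 1) ≤ n := by
  induction n using Nat.strong_induction_on with
  | _ n ih =>
    match n with
    | 0 => simp [hoppeDepth]
    | n + 1 =>
      rw [hoppeDepth_add_two]
      have hj := min_le_right (U n ω) (n + 1)
      generalize min (U n ω) (n + 1) = j at hj ⊢
      cases j with
      | zero => simp [hoppeDepth]
      | succ j => have := ih j (by omega); omega

theorem hoppeDepth_congr {U : ℕ → Ω → ℕ} {V : ℕ → Ω' → ℕ} {ω : Ω} {ω' : Ω'} {n : ℕ}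
    (h : ∀ k, k + 2 ≤ n → U k ω = V k ω') : hoppeDepth U ω n = hoppeDepth V ω' n := by
  induction n using Nat.strong_induction_on with
  | _ n ih =>
    match n with
    | 0 | 1 => simp [hoppeDepth]
    | n + 2 =>
      rw [hoppeDepth_add_two, hoppeDepth_add_two, h n le_rfl,
        ih _ (by omega) fun k hk => h k (by omega)]

/-- Reads the parent choices off the joint value of `U 0, …, U (n - 1)`: the depths of the nodes
`j ≤ n + 1` factor through it, which makes them measurable and independent of `U n`. -/
def prefixParents (n k : ℕ) (v : range n → ℕ) : ℕ := if h : k ∈ range n then v ⟨k, h⟩ else 0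

theorem hoppeDepth_eq_prefixParents (U : ℕ → Ω → ℕ) (ω : Ω) {j n : ℕ} (hj : j ≤ n + 1) :
    hoppeDepth U ω j = hoppeDepth (prefixParents n) (fun i : range n => U i ω) j :=
  hoppeDepth_congr fun k hk => by simp [prefixParents, show k < n by omega]

variable [MeasurableSpace Ω] {U : ℕ → Ω → ℕ}

theorem measurable_hoppeDepth (hU : ∀ k, Measurable (U k)) (j : ℕ) :
    Measurable fun ω => hoppeDepth U ω j := by
  simp_rw [hoppeDepth_eq_prefixParents U _ (Nat.le_succ j)]
  exact (measurable_of_countable fun v => hoppeDepth (prefixParents j) v j).comp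
    (measurable_pi_lambda (fun ω (i : range j) => U i ω) fun i => hU i)

theorem indepFun_hoppeDepth {μ : Measure Ω} (hU : ∀ k, Measurable (U k)) (hind : iIndepFun U μ)
    {j n : ℕ} (hj : j ≤ n + 1) : IndepFun (U n) (fun ω => hoppeDepth U ω j) μ := by
  have h := (hind.indepFun_finset {n} (range n) (by simp) hU).comp
    (measurable_of_countable fun v : ({n} : Finset ℕ) → ℕ => v ⟨n, mem_singleton_self n⟩)
    (measurable_of_countable fun v => hoppeDepth (prefixParents n) v j)
  rwa [show (fun ω => hoppeDepth U ω j) = (fun v => hoppeDepth (prefixParents n) v j) ∘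
    (fun ω (i : range n) => U i ω) from funext fun ω => hoppeDepth_eq_prefixParents U ω hj]

end HoppeDepth

section HoppeAncestorProb

/-- `hoppeDepth U ω (N + 2) - 1` counts the ancestors of node `N + 2` among the nodes
`2, …, N + 1`; node `i + 2` is one of them with probability `hoppeAncestorProb θ i`,
independently over `i`. -/
def hoppeAncestorProb (θ : ℝ) (i : ℕ) : ℝ := 1 / (θ + i + 1)

variable {θ : ℝ}

theorem hoppeAncestorProb_nonneg (hθ : 0 ≤ θ) (i : ℕ) : 0 ≤ hoppeAncestorProb θ i := by
  unfold hoppeAncestorProb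
  positivity

theorem hoppeAncestorProb_le_one (hθ : 0 ≤ θ) (i : ℕ) : hoppeAncestorProb θ i ≤ 1 := by
  rw [hoppeAncestorProb, div_le_one (by positivity)]
  linarith [i.cast_nonneg (α := ℝ)]

theorem add_mul_poissonBinomial_hoppeAncestorProb_zero (hθ : 0 ≤ θ) (N : ℕ) :
    (θ + N) * poissonBinomial (hoppeAncestorProb θ) N 0 = θ := by
  induction N with
  | zero => simp [poissonBinomial]
  | succ N ih =>
    have : θ + N + 1 ≠ 0 := by positivity
    calc (θ + (N + 1 : ℕ)) * poissonBinomial (hoppeAncestorProb θ) (N + 1) 0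
        = (θ + N) * poissonBinomial (hoppeAncestorProb θ) N 0 := by
          rw [poissonBinomial, hoppeAncestorProb]
          push_cast
          field_simp
          ring
      _ = θ := ih

theorem add_mul_poissonBinomial_hoppeAncestorProb_succ (hθ : 0 ≤ θ) (N m : ℕ) :
    (θ + N) * poissonBinomial (hoppeAncestorProb θ) N (m + 1) =
      ∑ i ∈ range N, poissonBinomial (hoppeAncestorProb θ) i m := by
  induction N with
  | zero => simp [poissonBinomial]
  | succ N ih =>
    have : θ + N + 1 ≠ 0 := by positivity
    rw [poissonBinomial, sum_range_succ, ← ih, hoppeAncestorProb]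
    push_cast
    field_simp
    ring

theorem sum_hoppeAncestorProb_sq_le (hθ : 0 < θ) (N : ℕ) :
    ∑ i ∈ range N, hoppeAncestorProb θ i ^ 2 ≤ 1 / θ := by
  have htel := sum_range_sub' (fun i : ℕ => 1 / (θ + i)) N
  calc ∑ i ∈ range N, hoppeAncestorProb θ i ^ 2
      ≤ ∑ i ∈ range N, (1 / (θ + i) - 1 / (θ + (i + 1 : ℕ))) := by
        refine sum_le_sum fun i _ => ?_
        have : 0 < θ + i := by positivity
        rw [hoppeAncestorProb, div_pow, one_pow, div_sub_div _ _ this.ne' (by positivity),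
          div_le_div_iff₀ (by positivity) (by positivity)]
        push_cast
        nlinarith
    _ = 1 / θ - 1 / (θ + N) := by simpa using htel
    _ ≤ 1 / θ := by
        have : 0 ≤ 1 / (θ + N) := by positivity
        linarith

theorem log_le_mul_one_add_sum_hoppeAncestorProb (hθ : 0 ≤ θ) (N : ℕ) :
    Real.log (N + 2) ≤ (θ + 1) * (1 + ∑ i ∈ range N, hoppeAncestorProb θ i) := by
  have h := log_add_one_le_harmonic (N + 1)
  simp only [harmonic, sum_range_succ' _ N] at h
  push_cast at h
  rw [inv_one, add_assoc (N : ℝ), one_add_one_eq_two] at h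
  calc Real.log (N + 2)
      ≤ ∑ i ∈ range N, ((i : ℝ) + 1 + 1)⁻¹ + 1 := h
    _ ≤ ∑ i ∈ range N, (θ + 1) * hoppeAncestorProb θ i + (θ + 1) := by
        refine add_le_add (sum_le_sum fun i _ => ?_) (by linarith)
        rw [hoppeAncestorProb, mul_one_div, inv_eq_one_div,
          div_le_div_iff₀ (by positivity) (by positivity)]
        nlinarith [i.cast_nonneg (α := ℝ)]
    _ = (θ + 1) * (1 + ∑ i ∈ range N, hoppeAncestorProb θ i) := by rw [mul_add, mul_sum]; ring

end HoppeAncestorProb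

section HoppeDepthLaw

variable {Ω : Type*} [MeasurableSpace Ω] {μ : Measure Ω} [IsProbabilityMeasure μ] {θ : ℝ}
  {U : ℕ → Ω → ℕ}

theorem measureReal_hoppeDepth_add_two_eq_sum (hU : IsHoppeParents θ μ U) (n m : ℕ) :
    μ.real {ω | hoppeDepth U ω (n + 2) = m + 1} =
      ∑ j ∈ Icc 1 (n + 1), μ.real {ω | U n ω = j} * μ.real {ω | hoppeDepth U ω j = m} := by
  have hparent : ∀ᵐ ω ∂μ, 1 ≤ U n ω ∧ U n ω ≤ n + 1 := by
    have hR : MeasurableSet {ω | 1 ≤ U n ω ∧ U n ω ≤ n + 1} :=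
      (hU.meas n) (MeasurableSet.of_discrete (s := {x | 1 ≤ x ∧ x ≤ n + 1}))
    rw [ae_iff, ← Set.compl_ofPred, prob_compl_eq_zero_iff hR]
    exact hU.range n
  calc μ.real {ω | hoppeDepth U ω (n + 2) = m + 1}
      = μ.real (⋃ j ∈ Icc 1 (n + 1), {ω | U n ω = j} ∩ {ω | hoppeDepth U ω j = m}) := by
        refine measureReal_congr (eventuallyEq_set.2 (hparent.mono fun ω hω => ?_))
        simp only [Set.mem_ofPred_eq, Set.mem_iUnion, Set.mem_inter_iff, mem_Icc,
          hoppeDepth_add_two, min_eq_left hω.2]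
        exact ⟨fun h => ⟨U n ω, hω, rfl, by omega⟩, fun ⟨j, _, hj, h⟩ => by rw [hj, h]⟩
    _ = ∑ j ∈ Icc 1 (n + 1), μ.real ({ω | U n ω = j} ∩ {ω | hoppeDepth U ω j = m}) :=
        measureReal_biUnion_finset
          (fun i _ j _ hij => Set.disjoint_left.2 fun ω hi hj => hij (hi.1.symm.trans hj.1))
          fun j _ => ((hU.meas n) (.singleton j)).inter
            ((measurable_hoppeDepth hU.meas j) (.singleton m))
    _ = ∑ j ∈ Icc 1 (n + 1), μ.real {ω | U n ω = j} * μ.real {ω | hoppeDepth U ω j = m} := by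
        refine sum_congr rfl fun j hj => ?_
        have hind := indepFun_hoppeDepth hU.meas hU.indep (mem_Icc.1 hj).2
        rw [measureReal_def, measureReal_def, measureReal_def, ← ENNReal.toReal_mul]
        exact congrArg ENNReal.toReal
          (hind.measure_inter_preimage_eq_mul _ _ (.singleton j) (.singleton m))

theorem measureReal_hoppeDepth_eq_poissonBinomial (hθ : 0 < θ) (hU : IsHoppeParents θ μ U)
    (n m : ℕ) :
    μ.real {ω | hoppeDepth U ω (n + 2) = m + 1} = poissonBinomial (hoppeAncestorProb θ) n m := by
  induction n using Nat.strong_induction_on generalizing m with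
  | _ n ih =>
    have hθn : 0 < θ + n := by positivity
    have hsplit (f : ℕ → ℝ) : ∑ j ∈ Icc 1 (n + 1), f j = f 1 + ∑ i ∈ range n, f (i + 2) := by
      rw [← Ico_add_one_right_eq_Icc, sum_Ico_eq_sum_range, Nat.add_sub_cancel, sum_range_succ',
        add_comm]
      simp only [add_comm 1, add_assoc]
    have hroot : μ.real {ω | U n ω = 1} = θ / (θ + n) := by
      rw [measureReal_def, hU.root, ENNReal.toReal_ofReal (by positivity)]
    have hnonroot (i : ℕ) (hi : i ∈ range n) : μ.real {ω | U n ω = i + 2} = 1 / (θ + n) := by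
      rw [measureReal_def, hU.nonroot n (i + 2) (by omega) (by simp at hi; omega),
        ENNReal.toReal_ofReal (by positivity)]
    rw [measureReal_hoppeDepth_add_two_eq_sum hU, hsplit, hroot,
      sum_congr rfl fun i hi => by rw [hnonroot i hi], ← mul_sum]
    cases m with
    | zero =>
      have h₀ (i : ℕ) : μ.real {ω | hoppeDepth U ω (i + 2) = 0} = 0 := by simp [hoppeDepth_add_two]
      have h₁ : μ.real {ω | hoppeDepth U ω 1 = 0} = 1 := by simp [hoppeDepth]
      rw [h₁, mul_one, sum_congr rfl fun i _ => h₀ i, sum_const_zero, mul_zero, add_zero,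
        div_eq_iff hθn.ne', mul_comm, add_mul_poissonBinomial_hoppeAncestorProb_zero hθ.le]
    | succ m =>
      have h₁ : μ.real {ω | hoppeDepth U ω 1 = m + 1} = 0 := by simp [hoppeDepth]
      rw [h₁, mul_zero, zero_add, sum_congr rfl fun i hi => ih i (mem_range.1 hi) m,
        ← add_mul_poissonBinomial_hoppeAncestorProb_succ hθ.le]
      field_simp

theorem integral_comp_hoppeDepth (hθ : 0 < θ) (hU : IsHoppeParents θ μ U) (N : ℕ)
    (f : ℕ → ℝ) :
    ∫ ω, f (hoppeDepth U ω (N + 2)) ∂μ =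
      ∑ m ∈ range (N + 1), poissonBinomial (hoppeAncestorProb θ) N m * f (m + 1) := by
  have h₀ : (fun ω => hoppeDepth U ω (N + 2)) ⁻¹' {0} = ∅ := by
    ext ω
    simp [hoppeDepth_add_two]
  rw [integral_comp_eq_sum_of_lt (measurable_hoppeDepth hU.meas _)
    (fun ω => Nat.lt_succ_of_le (hoppeDepth_add_one_le U ω (N + 1))), sum_range_succ', h₀,
    measureReal_empty, zero_mul, add_zero]
  exact sum_congr rfl fun m _ => by rw [← measureReal_hoppeDepth_eq_poissonBinomial hθ hU]; rfl

theorem integral_hoppeDepth (hθ : 0 < θ) (hU : IsHoppeParents θ μ U) (N : ℕ) :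
    ∫ ω, (hoppeDepth U ω (N + 2) : ℝ) ∂μ = 1 + ∑ i ∈ range N, hoppeAncestorProb θ i := by
  rw [integral_comp_hoppeDepth hθ hU N Nat.cast]
  push_cast
  simp only [mul_add, mul_one, sum_add_distrib, sum_poissonBinomial_mul_natCast,
    sum_poissonBinomial]
  ring

theorem measureReal_hoppeDepth_preimage (hθ : 0 < θ) (hU : IsHoppeParents θ μ U) (N : ℕ)
    (A : Set ℕ) :
    μ.real ((fun ω => hoppeDepth U ω (N + 2)) ⁻¹' A) =
      ∑ m ∈ range (N + 1), poissonBinomial (hoppeAncestorProb θ) N m * A.indicator 1 (m + 1) := by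
  rw [← integral_comp_hoppeDepth hθ hU N,
    ← integral_indicator_one ((measurable_hoppeDepth hU.meas _) .of_discrete)]
  rfl

theorem tvDist_map_hoppeDepth_poissonMeasure_le (hθ : 0 < θ) (hU : IsHoppeParents θ μ U)
    (N : ℕ) :
    tvDist (μ.map fun ω => hoppeDepth U ω (N + 2))
        (poissonMeasure (∫ ω, (hoppeDepth U ω (N + 2) : ℝ) ∂μ).toNNReal) ≤
      (1 + 1 / θ) / (1 + ∑ i ∈ range N, hoppeAncestorProb θ i) := by
  have hp₀ := hoppeAncestorProb_nonneg hθ.le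
  have hmean := integral_hoppeDepth hθ hU N
  have hr : ((∫ ω, (hoppeDepth U ω (N + 2) : ℝ) ∂μ).toNNReal : ℝ) =
      1 + ∑ i ∈ range N, hoppeAncestorProb θ i := by
    rw [Real.coe_toNNReal _ (hmean ▸ by linarith [sum_nonneg fun i (_ : i ∈ range N) => hp₀ i]),
      hmean]
  refine ciSup_le fun A => ?_
  rw [← measureReal_def, ← measureReal_def,
    map_measureReal_apply (measurable_hoppeDepth hU.meas _) .of_discrete,
    measureReal_hoppeDepth_preimage hθ hU]
  refine (abs_sum_poissonBinomial_indicator_succ_sub_poissonMeasure_le hp₀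
    (hoppeAncestorProb_le_one hθ.le) N hr A).trans ?_
  rw [hr]
  exact div_le_div_of_nonneg_right (by linarith [sum_hoppeAncestorProb_sq_le hθ N])
    (hr ▸ NNReal.coe_nonneg _)

end HoppeDepthLaw

/-- Poisson approximation of the depth of the `n`-th node of a Hoppe tree:
the total variation distance between the law of the depth and the Poisson distribution
with parameter `E[D_n]` is `O(1 / log n)`. -/
theorem hoppe_depth_poisson_approximation
    {Ω : Type*} [MeasurableSpace Ω]
    (θ : ℝ) (hθ : 0 < θ)
    (μ : Measure Ω) [IsProbabilityMeasure μ] (U : ℕ → Ω → ℕ) (hU : IsHoppeParents θ μ U) :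
    ∃ C : ℝ, 0 < C ∧ ∃ n₀ : ℕ, ∀ n : ℕ, n₀ ≤ n →
      tvDist (Measure.map (fun ω => hoppeDepth U ω n) μ)
          (poissonMeasure (Real.toNNReal (∫ ω, (hoppeDepth U ω n : ℝ) ∂μ)))
        ≤ C / Real.log n := by
  refine ⟨(1 + 1 / θ) * (θ + 1), by positivity, 2, fun n hn => ?_⟩
  obtain ⟨N, rfl⟩ : ∃ N, n = N + 2 := ⟨n - 2, by omega⟩
  have hmean₀ : 0 < 1 + ∑ i ∈ range N, hoppeAncestorProb θ i := by
    linarith [sum_nonneg fun i (_ : i ∈ range N) => hoppeAncestorProb_nonneg hθ.le i]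
  have hlog := log_le_mul_one_add_sum_hoppeAncestorProb hθ.le N
  have hlog₀ : 0 < Real.log (N + 2) := Real.log_pos (by linarith [N.cast_nonneg (α := ℝ)])
  refine (tvDist_map_hoppeDepth_poissonMeasure_le hθ hU N).trans ?_
  push_cast
  rw [div_le_div_iff₀ hmean₀ hlog₀, mul_assoc]
  exact mul_le_mul_of_nonneg_left (by linarith) (by positivity)

end
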